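/- Let A be an invertible symmetric real n×n matrix, let t be an index, and let ṽ ∈ ℝⁿ. Form Ã by replacing both the t-th row and the t-th column of A with ṽ (so Ã is symmetric with Ã e_t = ṽ and e_tᵀ Ã = ṽᵀ). Then det(Ã) = [ (e_tᵀ A⁻¹ ṽ)² + (e_tᵀ A⁻¹ e_t) · ṽᵀ (e_t − A⁻¹ ṽ) ] · det(A). -/

import Mathlib

/-!
Replacing the `t`-th column of `A` by `v` and then its `t`-th row by `w` is the rank-two update
`Ã = A + c e_tᵀ + e_t rᵀ` with `c = v - A e_t` and `r = w - (row t of the intermediate matrix)`.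
By the matrix determinant lemma, `det Ã / det A` is the determinant of a `2 × 2` matrix whose
entries are bilinear forms in `A⁻¹`; since `A⁻¹ A = A A⁻¹ = 1` they collapse to
`det Ã = ((wᵀA⁻¹)_t (A⁻¹v)_t + (A⁻¹)_tt (w_t - wᵀA⁻¹v)) det A`.
For symmetric `A` and `w = v` this is the claimed formula.
-/

open Matrix

namespace Matrix

variable {n R : Type*} [Fintype n] [DecidableEq n] [CommRing R]

omit [Fintype n] in
theorem updateRow_eq_add_vecMulVec (M : Matrix n n R) (t : n) (w : n → R) :
    M.updateRow t w = M + vecMulVec (Pi.single t 1) (w - M.row t) := by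
  ext i j
  by_cases hi : i = t
  · subst hi; simp [vecMulVec_apply]
  · simp [hi, vecMulVec_apply]

omit [Fintype n] in
theorem updateCol_eq_add_vecMulVec (M : Matrix n n R) (t : n) (v : n → R) :
    M.updateCol t v = M + vecMulVec (v - M.col t) (Pi.single t 1) := by
  ext i j
  by_cases hj : j = t
  · subst hj; simp [vecMulVec_apply]
  · simp [hj, vecMulVec_apply]

theorem det_add_vecMulVec_add_vecMulVec {A : Matrix n n R} (hA : IsUnit A.det)
    (x₁ y₁ x₂ y₂ : n → R) :
    (A + vecMulVec x₁ y₁ + vecMulVec x₂ y₂).det =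
      A.det * ((1 + y₁ ⬝ᵥ A⁻¹ *ᵥ x₁) * (1 + y₂ ⬝ᵥ A⁻¹ *ᵥ x₂)
        - (y₁ ⬝ᵥ A⁻¹ *ᵥ x₂) * (y₂ ⬝ᵥ A⁻¹ *ᵥ x₁)) := by
  set X : Matrix (Fin 2) n R := ![x₁, x₂]
  set Y : Matrix (Fin 2) n R := ![y₁, y₂]
  have hfac : vecMulVec x₁ y₁ + vecMulVec x₂ y₂ = Xᵀ * Y := by
    ext i j
    rw [mul_apply, Fin.sum_univ_two]
    rfl
  have hentry (k l : Fin 2) : (Y * A⁻¹ * Xᵀ) k l = Y k ⬝ᵥ A⁻¹ *ᵥ X l := by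
    rw [mul_apply', mul_apply_eq_vecMul, dotProduct_mulVec]
    rfl
  rw [add_assoc, hfac, det_add_mul _ _ hA, det_fin_two]
  simp only [add_apply, hentry]
  simp [X, Y]

theorem det_updateRow_updateCol {A : Matrix n n R} (hA : IsUnit A.det) (t : n) (v w : n → R) :
    ((A.updateCol t v).updateRow t w).det =
      ((w ᵥ* A⁻¹) t * (A⁻¹ *ᵥ v) t + A⁻¹ t t * (w t - w ⬝ᵥ A⁻¹ *ᵥ v)) * A.det := by
  set e : n → R := Pi.single t 1
  set c := v - A.col t
  set r := w - A.row t - c t • e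
  have hdecomp : (A.updateCol t v).updateRow t w = A + vecMulVec c e + vecMulVec e r := by
    have hrow_t : (A + vecMulVec c e).row t = A.row t + c t • e := rfl
    rw [updateCol_eq_add_vecMulVec, updateRow_eq_add_vecMulVec, hrow_t, sub_add_eq_sub_sub]
  have hSe : (A⁻¹ *ᵥ e) t = A⁻¹ t t := by simp [e]
  have hwSe : w ⬝ᵥ A⁻¹ *ᵥ e = (w ᵥ* A⁻¹) t := by rw [dotProduct_mulVec, dotProduct_single_one]
  have hSc : A⁻¹ *ᵥ c = A⁻¹ *ᵥ v - e := by
    rw [mulVec_sub, ← mulVec_single_one, mulVec_mulVec, nonsing_inv_mul A hA, one_mulVec]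
  have hrow (x : n → R) : A.row t ⬝ᵥ A⁻¹ *ᵥ x = x t := by
    change (A *ᵥ A⁻¹ *ᵥ x) t = x t
    rw [mulVec_mulVec, mul_nonsing_inv A hA, one_mulVec]
  have hr (x : n → R) : r ⬝ᵥ A⁻¹ *ᵥ x = w ⬝ᵥ A⁻¹ *ᵥ x - x t - c t * (A⁻¹ *ᵥ x) t := by
    rw [sub_dotProduct, sub_dotProduct, smul_dotProduct, hrow, single_one_dotProduct, smul_eq_mul]
  rw [hdecomp, det_add_vecMulVec_add_vecMulVec hA, hr, hr, hwSe, single_one_dotProduct,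
    single_one_dotProduct, hSe, hSc, dotProduct_sub, dotProduct_single_one]
  simp only [c, e, Pi.sub_apply, Pi.single_eq_same, add_sub_cancel, col_apply]
  ring

end Matrix

theorem stmt_4 {n : ℕ} (A : Matrix (Fin n) (Fin n) ℝ) (hsymm : A.IsSymm)
    (hinv : IsUnit A.det) (t : Fin n) (v : Fin n → ℝ)
    (Atil : Matrix (Fin n) (Fin n) ℝ)
    (hAtil : ∀ i j, Atil i j = if i = t then v j else if j = t then v i else A i j) :
    Atil.det = (((A⁻¹.mulVec v) t) ^ 2
      + A⁻¹ t t * dotProduct v ((Pi.single t 1 : Fin n → ℝ) - A⁻¹.mulVec v)) * A.det := by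
  have hAtil_eq : Atil = (A.updateCol t v).updateRow t v := by
    ext i j
    rw [hAtil, updateRow_apply, updateCol_apply]
  have hinv_symm : v ᵥ* A⁻¹ = A⁻¹ *ᵥ v := by
    rw [← mulVec_transpose, transpose_nonsing_inv, hsymm.eq]
  rw [hAtil_eq, det_updateRow_updateCol hinv, hinv_symm, dotProduct_sub, dotProduct_single_one]
  ring
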